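/- arXiv:2106.03027 — 2 statements merged into one kernel-verified Lean document; each statement's English description precedes it below -/
import Mathlib

section
/- Task competition bound (Theorem 1, deterministic form conditional on uniform convergence). Let X and Y be measurable spaces, H a nonempty class of functions X → Y, and P_1, …, P_k probability measures on X × Y (k ≥ 1). Assume that for each i there exists h*_i ∈ H with e_{P_i}(h*_i) = ⨅_{h ∈ H} e_{P_i}(h). Let c ≥ 1 and ρ_1, …, ρ_k be reals with ρ_i ≥ 1 for all i, and set ρ_max = max_{1 ≤ i ≤ k} ρ_i. Assume each P_i is ρ_i-related to P_1 with coefficient c, i.e. for every h ∈ H, c·(e_{P_i}(h) − e_{P_i}(h*_i))^{1/ρ_i} ≥ e_{P_1}(h) − e_{P_1}(h*_i). Let ĥ ∈ H, and let ε̂ ≥ 0 and ε ≥ 0 be real numbers such that (1/k)·Σ_{i=1}^k e_{P_i}(ĥ) ≤ ε̂ + ε (in the paper, ε̂ is the empirical risk of ĥ on the pooled training samples and ε is the uniform-convergence deviation c'·((D − log δ)/(k m))^{1/2}, which holds with probability at least 1 − δ). Then e_{P_1}(ĥ) − e_{P_1}(h*_1) ≤ (1/k)·Σ_{i=1}^k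 (e_{P_1}(h*_i) − e_{P_1}(h*_1)) + c·(ε̂ + ε)^{1/ρ_max}. -/
open MeasureTheory Finset

/-- Task competition bound (Theorem 1 of "Model Zoo", deterministic form
conditional on uniform convergence): if each task `P i` is `ρ i`-related
(with coefficient `c`) to the task `P 0`, and the average population risk of
`ĥ` is at most `ε̂ + ε` (empirical risk plus uniform-convergence deviation),
then the excess risk of `ĥ` on task `P 0` is bounded by the average
discrepancy of the per-task optimal hypotheses plus `c * (ε̂ + ε) ^ (1/ρmax)`. -/
theorem modelzoo_task_competition
    {X Y : Type*} [MeasurableSpace X] [MeasurableSpace Y]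
    (H : Set (X → Y)) (hHne : H.Nonempty)
    (k : ℕ) (hk : 0 < k)
    (P : Fin k → Measure (X × Y)) (hP : ∀ i, IsProbabilityMeasure (P i))
    (hmeas : ∀ h ∈ H, MeasurableSet {p : X × Y | h p.1 ≠ p.2})
    -- population risk of a hypothesis on each task
    (e : Fin k → (X → Y) → ℝ)
    (he : ∀ i h, e i h = ((P i) {p : X × Y | h p.1 ≠ p.2}).toReal)
    -- per-task optimal hypotheses
    (hstar : Fin k → (X → Y))
    (hstarH : ∀ i, hstar i ∈ H)
    (hstarMin : ∀ i, e i (hstar i) = ⨅ h' : H, e i (h' : X → Y))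
    -- relatedness data
    (c : ℝ) (hc : 1 ≤ c)
    (ρ : Fin k → ℝ) (hρ : ∀ i, 1 ≤ ρ i)
    (ρmax : ℝ) (hρmax : IsGreatest (Set.range ρ) ρmax)
    (hrelated : ∀ i, ∀ h ∈ H,
      c * (e i h - e i (hstar i)) ^ (1 / ρ i)
        ≥ e ⟨0, hk⟩ h - e ⟨0, hk⟩ (hstar i))
    -- the trained hypothesis and the uniform-convergence bound
    (hHat : X → Y) (hHatH : hHat ∈ H)
    (εhat ε : ℝ) (hεhat : 0 ≤ εhat) (hε : 0 ≤ ε)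
    (hUC : (1 / (k : ℝ)) * ∑ i : Fin k, e i hHat ≤ εhat + ε) :
    e ⟨0, hk⟩ hHat - e ⟨0, hk⟩ (hstar ⟨0, hk⟩)
      ≤ (1 / (k : ℝ)) *
          ∑ i : Fin k, (e ⟨0, hk⟩ (hstar i) - e ⟨0, hk⟩ (hstar ⟨0, hk⟩))
        + c * (εhat + ε) ^ (1 / ρmax) := by
  have hc0 : (0:ℝ) < c := lt_of_lt_of_le one_pos hc
  have hk0 : (0:ℝ) < (k:ℝ) := Nat.cast_pos.2 hk
  have enonneg : ∀ i h, 0 ≤ e i h := fun i h => by rw [he]; exact ENNReal.toReal_nonneg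
  have ele1 : ∀ i h, e i h ≤ 1 := fun i h => by
    rw [he]
    have := hP i
    have h1 : (P i) {p : X × Y | h p.1 ≠ p.2} ≤ 1 := prob_le_one
    simpa using ENNReal.toReal_mono ENNReal.one_ne_top h1
  have hmin : ∀ i, e i (hstar i) ≤ e i hHat := fun i => by
    rw [hstarMin i]
    exact ciInf_le ⟨0, fun x ⟨h', hh'⟩ => hh' ▸ enonneg i h'⟩ (⟨hHat, hHatH⟩ : H)
  set δ : Fin k → ℝ := fun i => e i hHat - e i (hstar i) with hδ
  have hδ0 : ∀ i, 0 ≤ δ i := fun i => sub_nonneg.2 (hmin i)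
  have hδ1 : ∀ i, δ i ≤ 1 := fun i =>
    sub_le_iff_le_add.2 ((ele1 i hHat).trans (le_add_of_nonneg_right (enonneg i _)))
  obtain ⟨j, hj⟩ := hρmax.1
  have hρmax1 : 1 ≤ ρmax := hj ▸ hρ j
  have hρmaxpos : (0:ℝ) < ρmax := lt_of_lt_of_le one_pos hρmax1
  have key : ∀ i, e ⟨0, hk⟩ hHat - e ⟨0, hk⟩ (hstar i) ≤ c * δ i ^ (1 / ρmax) := by
    intro i
    have h1 := hrelated i hHat hHatH
    have h2 : δ i ^ (1 / ρ i) ≤ δ i ^ (1 / ρmax) := by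
      rcases eq_or_lt_of_le (hδ0 i) with h | h
      · rw [← h, Real.zero_rpow (one_div_ne_zero (by linarith [hρ i])),
          Real.zero_rpow (one_div_ne_zero hρmaxpos.ne')]
      · exact Real.rpow_le_rpow_of_exponent_ge h (hδ1 i)
          (one_div_le_one_div_of_le (lt_of_lt_of_le one_pos (hρ i)) (hρmax.2 ⟨i, rfl⟩))
    exact h1.trans (mul_le_mul_of_nonneg_left h2 hc0.le)
  have hw : ∑ _i : Fin k, (1/(k:ℝ)) = 1 := by
    rw [Finset.sum_const]
    simp
    field_simp
  have mean : ∑ i : Fin k, (1/(k:ℝ)) * δ i ^ (1 / ρmax)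
      ≤ (∑ i : Fin k, (1/(k:ℝ)) * δ i) ^ (1 / ρmax) := by
    have h := Real.arith_mean_le_rpow_mean Finset.univ (fun _ => 1/(k:ℝ))
      (fun i => δ i ^ (1 / ρmax)) (fun i _ => by positivity) hw
      (fun i _ => Real.rpow_nonneg (hδ0 i) _) hρmax1
    have hrw : ∀ i : Fin k, (δ i ^ (1/ρmax)) ^ ρmax = δ i := fun i => by
      rw [← Real.rpow_mul (hδ0 i), one_div_mul_cancel hρmaxpos.ne', Real.rpow_one]
    simp only [hrw] at h
    exact h
  have hsum : ∑ i : Fin k, (1/(k:ℝ)) * δ i ≤ εhat + ε := by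
    rw [← Finset.mul_sum]
    refine le_trans ?_ hUC
    apply mul_le_mul_of_nonneg_left _ (by positivity)
    exact Finset.sum_le_sum fun i _ =>
      sub_le_self _ (enonneg i (hstar i))
  calc e ⟨0, hk⟩ hHat - e ⟨0, hk⟩ (hstar ⟨0, hk⟩)
      = ∑ i : Fin k, (1/(k:ℝ)) * (e ⟨0, hk⟩ hHat - e ⟨0, hk⟩ (hstar ⟨0, hk⟩)) := by
        rw [Finset.sum_const, Finset.card_univ, Fintype.card_fin, nsmul_eq_mul]
        field_simp
    _ ≤ ∑ i : Fin k, (1/(k:ℝ)) *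
          ((e ⟨0, hk⟩ (hstar i) - e ⟨0, hk⟩ (hstar ⟨0, hk⟩)) + c * δ i ^ (1 / ρmax)) := by
        refine Finset.sum_le_sum fun i _ => mul_le_mul_of_nonneg_left ?_ (by positivity)
        have := key i
        linarith
    _ = (1 / (k : ℝ)) * ∑ i : Fin k, (e ⟨0, hk⟩ (hstar i) - e ⟨0, hk⟩ (hstar ⟨0, hk⟩))
          + c * ∑ i : Fin k, (1/(k:ℝ)) * δ i ^ (1 / ρmax) := by
        rw [Finset.mul_sum, Finset.mul_sum, ← Finset.sum_add_distrib]
        congr 1 with i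
        ring
    _ ≤ (1 / (k : ℝ)) * ∑ i : Fin k, (e ⟨0, hk⟩ (hstar i) - e ⟨0, hk⟩ (hstar ⟨0, hk⟩))
          + c * (εhat + ε) ^ (1 / ρmax) := by
        gcongr
        refine mean.trans (Real.rpow_le_rpow
          (Finset.sum_nonneg fun i _ => mul_nonneg (by positivity) (hδ0 i))
          hsum (by positivity))
end

section
/- Population-risk core of the task competition bound. Let X and Y be measurable spaces, H a nonempty class of functions X → Y, and P_1, …, P_k probability measures on X × Y (k ≥ 1). Assume that for each i there exists h*_i ∈ H with e_{P_i}(h*_i) = ⨅_{h ∈ H} e_{P_i}(h). Let c ≥ 1 and ρ_1, …, ρ_k be reals with ρ_i ≥ 1 for all i, and set ρ_max = max_{1 ≤ i ≤ k} ρ_i. Assume that for every i and every h ∈ H, c·(e_{P_i}(h) − e_{P_i}(h*_i))^{1/ρ_i} ≥ e_{P_1}(h) − e_{P_1}(h*_i). Then for every h ∈ H, e_{P_1}(h) − e_{P_1}(h*_1) ≤ (1/k)·Σ_{i=1}^k (e_{P_1}(h*_i) − e_{P_1}(h*_1)) + c·((1/k)·Σ_{i=1}^k e_{P_i}(h))^{1/ρ_max}.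 -/
open MeasureTheory Finset

/-- Population-risk core of the task competition bound (Theorem 1 of
"Model Zoo"): if each task `P i` is `ρ i`-related (with coefficient `c`) to
the task `P 0`, then the excess risk of any hypothesis `h ∈ H` on task `P 0`
is bounded by the average discrepancy of the per-task optimal hypotheses plus
`c` times the `1/ρmax` power of the average population risk of `h`. -/
theorem modelzoo_population_risk_core
    {X Y : Type*} [MeasurableSpace X] [MeasurableSpace Y]
    (H : Set (X → Y)) (hHne : H.Nonempty)
    (k : ℕ) (hk : 0 < k)
    (P : Fin k → Measure (X × Y)) (hP : ∀ i, IsProbabilityMeasure (P i))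
    (hmeas : ∀ h ∈ H, MeasurableSet {p : X × Y | h p.1 ≠ p.2})
    -- population risk of a hypothesis on each task
    (e : Fin k → (X → Y) → ℝ)
    (he : ∀ i h, e i h = ((P i) {p : X × Y | h p.1 ≠ p.2}).toReal)
    -- per-task optimal hypotheses
    (hstar : Fin k → (X → Y))
    (hstarH : ∀ i, hstar i ∈ H)
    (hstarMin : ∀ i, e i (hstar i) = ⨅ h' : H, e i (h' : X → Y))
    -- relatedness data
    (c : ℝ) (hc : 1 ≤ c)
    (ρ : Fin k → ℝ) (hρ : ∀ i, 1 ≤ ρ i)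
    (ρmax : ℝ) (hρmax : IsGreatest (Set.range ρ) ρmax)
    (hrelated : ∀ i, ∀ h ∈ H,
      c * (e i h - e i (hstar i)) ^ (1 / ρ i)
        ≥ e ⟨0, hk⟩ h - e ⟨0, hk⟩ (hstar i)) :
    ∀ h ∈ H,
      e ⟨0, hk⟩ h - e ⟨0, hk⟩ (hstar ⟨0, hk⟩)
        ≤ (1 / (k : ℝ)) *
            ∑ i : Fin k, (e ⟨0, hk⟩ (hstar i) - e ⟨0, hk⟩ (hstar ⟨0, hk⟩))
          + c * ((1 / (k : ℝ)) * ∑ i : Fin k, e i h) ^ (1 / ρmax) := by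
  intro h hH
  set i0 : Fin k := ⟨0, hk⟩ with hi0
  have hkpos : (0:ℝ) < k := Nat.cast_pos.mpr hk
  have enonneg : ∀ i g, 0 ≤ e i g := fun i g => by
    rw [he]; exact ENNReal.toReal_nonneg
  have ele1 : ∀ i g, e i g ≤ 1 := fun i g => by
    have := hP i
    rw [he]
    simpa using ENNReal.toReal_mono ENNReal.one_ne_top prob_le_one
  have emin : ∀ i, ∀ g ∈ H, e i (hstar i) ≤ e i g := by
    intro i g hg
    rw [hstarMin i]
    refine ciInf_le ⟨0, ?_⟩ (⟨g, hg⟩ : H)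
    rintro x ⟨g', rfl⟩
    exact enonneg i g'
  obtain ⟨j, hj⟩ := hρmax.1
  have hρmax1 : 1 ≤ ρmax := hj ▸ hρ j
  have hρmaxpos : (0:ℝ) < ρmax := lt_of_lt_of_le one_pos hρmax1
  -- key per-task bound
  have key : ∀ i, e i0 h - e i0 (hstar i) ≤ c * (e i h) ^ (1 / ρmax) := by
    intro i
    refine le_trans (hrelated i h hH) ?_
    have hρi : (0:ℝ) < ρ i := lt_of_lt_of_le one_pos (hρ i)
    refine mul_le_mul_of_nonneg_left ?_ (le_trans zero_le_one hc)
    have h1 : (e i h - e i (hstar i)) ^ (1 / ρ i) ≤ (e i h) ^ (1 / ρ i) := by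
      apply Real.rpow_le_rpow (sub_nonneg.mpr (emin i h hH))
        (by linarith [enonneg i (hstar i)]) (by positivity)
    refine h1.trans ?_
    rcases eq_or_lt_of_le (enonneg i h) with h0 | h0
    · rw [← h0, Real.zero_rpow (by positivity), Real.zero_rpow (by positivity)]
    · exact Real.rpow_le_rpow_of_exponent_ge h0 (ele1 i h)
        (one_div_le_one_div_of_le hρi (hρmax.2 ⟨i, rfl⟩))
  -- Jensen step
  have jensen : ∑ i : Fin k, (1 / (k:ℝ)) * (e i h) ^ (1 / ρmax)
      ≤ ((1 / (k:ℝ)) * ∑ i : Fin k, e i h) ^ (1 / ρmax) := by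
    have := Real.arith_mean_le_rpow_mean (s := Finset.univ)
      (fun _ : Fin k => 1 / (k:ℝ)) (fun i => (e i h) ^ (1 / ρmax))
      (fun i _ => by positivity)
      (by rw [Finset.sum_const, Finset.card_univ, Fintype.card_fin, nsmul_eq_mul]; field_simp)
      (fun i _ => Real.rpow_nonneg (enonneg i h) _) hρmax1
    refine this.trans_eq ?_
    congr 1
    rw [Finset.mul_sum]
    refine Finset.sum_congr rfl fun i _ => ?_
    rw [← Real.rpow_mul (enonneg i h), one_div_mul_cancel hρmaxpos.ne', Real.rpow_one]
  have sumeq : e i0 h - e i0 (hstar i0)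
      = (1 / (k:ℝ)) * ∑ i : Fin k, (e i0 (hstar i) - e i0 (hstar i0))
        + (1 / (k:ℝ)) * ∑ i : Fin k, (e i0 h - e i0 (hstar i)) := by
    have h1 : ∑ i : Fin k, (e i0 (hstar i) - e i0 (hstar i0))
        = (∑ i : Fin k, e i0 (hstar i)) - k * e i0 (hstar i0) := by
      rw [Finset.sum_sub_distrib, Finset.sum_const, Finset.card_univ, Fintype.card_fin,
        nsmul_eq_mul]
    have h2 : ∑ i : Fin k, (e i0 h - e i0 (hstar i))
        = k * e i0 h - ∑ i : Fin k, e i0 (hstar i) := by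
      rw [Finset.sum_sub_distrib, Finset.sum_const, Finset.card_univ, Fintype.card_fin,
        nsmul_eq_mul]
    rw [h1, h2]
    field_simp
    ring
  rw [sumeq]
  refine add_le_add le_rfl ?_
  calc (1 / (k:ℝ)) * ∑ i : Fin k, (e i0 h - e i0 (hstar i))
      ≤ (1 / (k:ℝ)) * ∑ i : Fin k, c * (e i h) ^ (1 / ρmax) := by
        apply mul_le_mul_of_nonneg_left _ (by positivity)
        exact Finset.sum_le_sum fun i _ => key i
    _ = c * ∑ i : Fin k, (1 / (k:ℝ)) * (e i h) ^ (1 / ρmax) := by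
        rw [Finset.mul_sum, Finset.mul_sum]
        exact Finset.sum_congr rfl fun i _ => by ring
    _ ≤ c * ((1 / (k:ℝ)) * ∑ i : Fin k, e i h) ^ (1 / ρmax) := by
        exact mul_le_mul_of_nonneg_left jensen (le_trans zero_le_one hc)
end
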